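/- arXiv:1410.0781 — 7 statements merged into one kernel-verified Lean document; each statement's English description precedes it below -/
import Mathlib

section
/- For any dimension d ∈ ℕ, and constants c > 0 and p > 0, there do not exist mappings Z : ℝ^d → ℝ^d and U : ℝ^d → ℝ_+^d together with a real inner product (Hilbert) space H and a feature map ψ : ℝ^d × ℝ_+^d → H such that for all x, z ∈ ℝ^d and all u ∈ ℝ_+^d, ⟪ψ(Z(x), U(x)), ψ(z, u)⟫ = exp(−c · Σ_{i=1}^d u_i · |x_i − z_i|^p). -/
set_option maxHeartbeats 1000000


/-- For any dimension `d`, and constants `c > 0` and `p > 0`, there do not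
exist mappings `Z : ℝ^d → ℝ^d` and `U : ℝ^d → ℝ_+^d` together with a real inner product
(Hilbert) space `H` and a feature map `ψ : ℝ^d × ℝ_+^d → H` such that for all
`x z ∈ ℝ^d` and `u ∈ ℝ_+^d`,
`⟪ψ(Z x, U x), ψ(z, u)⟫ = exp (-c * ∑ i, u i * |x i - z i| ^ p)`. -/
theorem stmt0 (d : ℕ) (hd : 0 < d) (c p : ℝ) (hc : 0 < c) (hp : 0 < p)
    (H : Type*) [NormedAddCommGroup H] [InnerProductSpace ℝ H] :
    ¬ ∃ (Z U : (Fin d → ℝ) → (Fin d → ℝ))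
        (ψ : (Fin d → ℝ) → (Fin d → ℝ) → H),
        (∀ x i, 0 ≤ U x i) ∧
        (∀ (x z u : Fin d → ℝ), (∀ i, 0 ≤ u i) →
          (inner ℝ (ψ (Z x) (U x)) (ψ z u) : ℝ) =
            Real.exp (-c * ∑ i, u i * |x i - z i| ^ p)) := by
  rintro ⟨Z, U, ψ, hU, hinner⟩
  have hsum_nonneg : ∀ (u x z : Fin d → ℝ), (∀ i, 0 ≤ u i) →
      0 ≤ ∑ i, u i * |x i - z i| ^ p := by
    intro u x z hu
    exact Finset.sum_nonneg fun i _ =>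
      mul_nonneg (hu i) (Real.rpow_nonneg (abs_nonneg _) _)
  have hvv : ∀ x y : Fin d → ℝ, (inner ℝ (ψ (Z x) (U x)) (ψ (Z y) (U y)) : ℝ)
      = Real.exp (-c * ∑ i, U y i * |x i - Z y i| ^ p) := fun x y =>
    hinner x (Z y) (U y) (hU y)
  have hle1 : ∀ x y : Fin d → ℝ, (inner ℝ (ψ (Z x) (U x)) (ψ (Z y) (U y)) : ℝ) ≤ 1 := by
    intro x y
    rw [hvv]
    apply Real.exp_le_one_iff.mpr
    have := hsum_nonneg (U y) x (Z y) (hU y)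
    nlinarith
  have hnorm1 : ∀ x : Fin d → ℝ, ‖ψ (Z x) (U x)‖ ≤ 1 := by
    intro x
    have h := hle1 x x
    rw [real_inner_self_eq_norm_sq] at h
    nlinarith [norm_nonneg (ψ (Z x) (U x))]
  by_cases hcase : ∀ y, ∃ i, 0 < U y i
  · -- Case 2: every U y has a positive coordinate
    choose i0 hi0 using hcase
    set w := ψ 0 0 with hw_def
    have hw : ∀ x : Fin d → ℝ, (inner ℝ (ψ (Z x) (U x)) w : ℝ) = 1 := by
      intro x
      have h := hinner x 0 0 (fun i => le_refl 0)
      simpa using h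
    set M := ‖w‖ with hM_def
    have hM1 : 1 ≤ M := by
      have h := hw 0
      have h2 := real_inner_le_norm (ψ (Z 0) (U 0)) w
      have h3 := hnorm1 0
      have h4 := norm_nonneg w
      nlinarith
    set T := Real.log (2 * M ^ 2) / c with hT_def
    have hT0 : 0 ≤ T := by
      apply div_nonneg _ hc.le
      apply Real.log_nonneg
      nlinarith
    have hexpT : Real.exp (-(c * T)) = 1 / (2 * M ^ 2) := by
      have : c * T = Real.log (2 * M ^ 2) := by
        rw [hT_def]; field_simp
      rw [this, Real.exp_neg, Real.exp_log (by nlinarith)]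
      rw [one_div]
    -- construction of far-apart points
    have key : ∀ N : ℕ, ∃ R : ℕ → ℝ, ∀ i j, j < i → i < N →
        T ≤ ∑ m, U (fun _ => R j) m * |R i - Z (fun _ => R j) m| ^ p := by
      intro N
      induction N with
      | zero => exact ⟨fun _ => 0, fun i j _ h => absurd h (Nat.not_lt_zero i)⟩
      | succ N ih =>
        obtain ⟨R, hR⟩ := ih
        obtain ⟨B, hB⟩ := ((Finset.range N).image (fun j =>
          Z (fun _ => R j) (i0 (fun _ => R j)) +
            (T / U (fun _ => R j) (i0 (fun _ => R j))) ^ p⁻¹)).exists_le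
        refine ⟨Function.update R N B, ?_⟩
        intro i j hji hiN
        rcases Nat.lt_succ_iff_lt_or_eq.mp hiN with hi | rfl
        · rw [Function.update_of_ne (by omega), Function.update_of_ne (by omega)]
          exact hR i j hji hi
        · rw [Function.update_self, Function.update_of_ne (by omega)]
          set y := (fun _ => R j : Fin d → ℝ) with hy_def
          set u0 := U y (i0 y) with hu0_def
          set z0 := Z y (i0 y) with hz0_def
          have hu0 : 0 < u0 := hi0 y
          have hBj : z0 + (T / u0) ^ p⁻¹ ≤ B := by
            apply hB
            exact Finset.mem_image_of_mem _ (Finset.mem_range.mpr hji)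
          have hr0 : (0:ℝ) ≤ (T / u0) ^ p⁻¹ := Real.rpow_nonneg (div_nonneg hT0 hu0.le) _
          have h1 : (T / u0) ^ p⁻¹ ≤ B - z0 := by linarith
          have h2 : T / u0 ≤ (B - z0) ^ p := by
            calc T / u0 = ((T / u0) ^ p⁻¹) ^ p :=
                  (Real.rpow_inv_rpow (div_nonneg hT0 hu0.le) hp.ne').symm
              _ ≤ (B - z0) ^ p := Real.rpow_le_rpow hr0 h1 hp.le
          have h3 : T ≤ u0 * |B - z0| ^ p := by
            rw [abs_of_nonneg (by linarith)]
            rw [div_le_iff₀ hu0] at h2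
            nlinarith
          calc T ≤ u0 * |B - z0| ^ p := h3
            _ ≤ ∑ m, U y m * |B - Z y m| ^ p :=
                Finset.single_le_sum (f := fun m => U y m * |B - Z y m| ^ p)
                  (fun m _ => mul_nonneg (hU y m)
                    (Real.rpow_nonneg (abs_nonneg _) _))
                  (Finset.mem_univ (i0 y))
    obtain ⟨n, hfloor⟩ : ∃ n : ℕ, 2 * M ^ 2 < n := by
      obtain ⟨n, hn⟩ := exists_nat_gt (2 * M ^ 2)
      exact ⟨n, hn⟩
    obtain ⟨R, hR⟩ := key n
    set xk : ℕ → (Fin d → ℝ) := fun k _ => R k with hxk_def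
    set vk : ℕ → H := fun k => ψ (Z (xk k)) (U (xk k)) with hvk_def
    have hik : ∀ k l, k < l → l < n → (inner ℝ (vk l) (vk k) : ℝ) ≤ 1 / (2 * M ^ 2) := by
      intro k l hkl hln
      have h := hvv (xk l) (xk k)
      rw [hvk_def]
      rw [h, ← hexpT]
      apply Real.exp_le_exp.mpr
      have hS := hR l k hkl hln
      have hxx : (∑ m, U (xk k) m * |xk l m - Z (xk k) m| ^ p)
          = ∑ m, U (fun _ => R k) m * |R l - Z (fun _ => R k) m| ^ p := rfl
      rw [hxx]
      nlinarith
    have hik' : ∀ k l, k ≠ l → k < n → l < n →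
        (inner ℝ (vk k) (vk l) : ℝ) ≤ 1 / (2 * M ^ 2) := by
      intro k l hne hkn hln
      rcases lt_or_gt_of_ne hne with h | h
      · rw [real_inner_comm]; exact hik k l h hln
      · exact hik l k h hkn
    have hdiag : ∀ k, (inner ℝ (vk k) (vk k) : ℝ) ≤ 1 := fun k => hle1 (xk k) (xk k)
    set s : H := ∑ k ∈ Finset.range n, vk k with hs_def
    have hsw : (inner ℝ s w : ℝ) = n := by
      rw [hs_def, sum_inner]
      rw [Finset.sum_congr rfl (fun k _ => hw (xk k))]
      simp
    have hδ0 : (0:ℝ) < 1 / (2 * M ^ 2) := by positivity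
    have hs_norm : ‖s‖ ^ 2 ≤ n + n ^ 2 * (1 / (2 * M ^ 2)) := by
      rw [← real_inner_self_eq_norm_sq, hs_def, sum_inner]
      have hterm : ∀ k ∈ Finset.range n,
          (inner ℝ (vk k) (∑ l ∈ Finset.range n, vk l) : ℝ)
            ≤ 1 + n * (1 / (2 * M ^ 2)) := by
        intro k hk
        rw [inner_sum]
        have hb : ∀ l ∈ Finset.range n, (inner ℝ (vk k) (vk l) : ℝ)
            ≤ (if k = l then 1 else 0) + 1 / (2 * M ^ 2) := by
          intro l hl
          by_cases hkl : k = l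
          · subst hkl
            rw [if_pos rfl]
            linarith [hdiag k]
          · rw [if_neg hkl]
            have := hik' k l hkl (Finset.mem_range.mp hk) (Finset.mem_range.mp hl)
            linarith
        calc (∑ l ∈ Finset.range n, (inner ℝ (vk k) (vk l) : ℝ))
            ≤ ∑ l ∈ Finset.range n, ((if k = l then (1:ℝ) else 0) + 1 / (2 * M ^ 2)) :=
              Finset.sum_le_sum hb
          _ = 1 + n * (1 / (2 * M ^ 2)) := by
              rw [Finset.sum_add_distrib, Finset.sum_ite_eq, if_pos hk,
                Finset.sum_const, Finset.card_range, nsmul_eq_mul]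
      calc (∑ k ∈ Finset.range n, (inner ℝ (vk k) s : ℝ))
          ≤ ∑ k ∈ Finset.range n, (1 + n * (1 / (2 * M ^ 2))) :=
            Finset.sum_le_sum (by rw [hs_def]; exact hterm)
        _ = n * (1 + n * (1 / (2 * M ^ 2))) := by
            rw [Finset.sum_const, Finset.card_range, nsmul_eq_mul]
        _ = n + n ^ 2 * (1 / (2 * M ^ 2)) := by ring
    -- final contradiction
    have hfin : (n:ℝ) ≤ ‖s‖ * M := by
      rw [← hsw]; exact real_inner_le_norm s w
    have hn_pos : (0:ℝ) < n := by nlinarith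
    have hM0 : 0 < M := by linarith
    have hns : (n:ℝ) ^ 2 ≤ ‖s‖ ^ 2 * M ^ 2 := by
      have h0 : 0 ≤ ‖s‖ * M := le_trans hn_pos.le hfin
      nlinarith
    have hδM : (1 / (2 * M ^ 2)) * M ^ 2 = 1 / 2 := by
      rw [div_mul_eq_mul_div, one_mul, div_eq_div_iff (by positivity) (by norm_num)]
      ring
    have h5 : (n:ℝ) ^ 2 ≤ n * M ^ 2 + n ^ 2 * (1 / 2) := by
      calc (n:ℝ) ^ 2 ≤ ‖s‖ ^ 2 * M ^ 2 := hns
        _ ≤ ((n:ℝ) + n ^ 2 * (1 / (2 * M ^ 2))) * M ^ 2 := by nlinarith [sq_nonneg M]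
        _ = (n:ℝ) * M ^ 2 + n ^ 2 * ((1 / (2 * M ^ 2)) * M ^ 2) := by ring
        _ = (n:ℝ) * M ^ 2 + n ^ 2 * (1 / 2) := by rw [hδM]
    have h6 : (n:ℝ) * (2 * M ^ 2) < n * n := by nlinarith
    nlinarith
  · -- Case 1: some U y = 0
    push_neg at hcase
    obtain ⟨y, hy⟩ := hcase
    have hy0 : ∀ i, U y i = 0 := fun i => le_antisymm (hy i) (hU y i)
    have h1 : ∀ x, (inner ℝ (ψ (Z x) (U x)) (ψ (Z y) (U y)) : ℝ) = 1 := by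
      intro x
      rw [hvv]
      simp [hy0]
    have heq : ∀ x, ψ (Z x) (U x) = ψ (Z y) (U y) := by
      intro x
      have hyn : ‖ψ (Z y) (U y)‖ ^ 2 = 1 := by
        rw [← real_inner_self_eq_norm_sq, h1 y]
      have h2 : ‖ψ (Z x) (U x) - ψ (Z y) (U y)‖ ^ 2 ≤ 0 := by
        rw [norm_sub_sq_real, h1 x, hyn]
        have hx := hnorm1 x
        nlinarith [norm_nonneg (ψ (Z x) (U x))]
      have h3 : ‖ψ (Z x) (U x) - ψ (Z y) (U y)‖ = 0 := by
        nlinarith [norm_nonneg (ψ (Z x) (U x) - ψ (Z y) (U y))]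
      rwa [norm_sub_eq_zero_iff] at h3
    -- evaluate against ψ 0 1 at two points
    have e1 := hinner 0 0 1 (fun _ => zero_le_one)
    have e2 := hinner 1 0 1 (fun _ => zero_le_one)
    rw [heq 0] at e1
    rw [heq 1] at e2
    rw [e1] at e2
    have hs1 : (∑ i : Fin d, (1 : Fin d → ℝ) i * |(0 : Fin d → ℝ) i - (0 : Fin d → ℝ) i| ^ p)
        = 0 := by
      simp [Real.zero_rpow hp.ne']
    have hs2 : (∑ i : Fin d, (1 : Fin d → ℝ) i * |(1 : Fin d → ℝ) i - (0 : Fin d → ℝ) i| ^ p)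
        = d := by
      simp
    rw [hs1, hs2] at e2
    have he := Real.exp_injective e2
    have hd1 : (1:ℝ) ≤ d := by exact_mod_cast hd
    nlinarith
end

section
/- Let H be a real (or complex) Hilbert space and let V ⊆ H be a set that contains an ε-orthonormal subset of size n for every ε > 0 and every n ∈ ℕ. Then for every vector u ∈ H, inf{ |⟪u, v⟫| : v ∈ V } = 0. -/
/-- A set `S` in an inner 𝕜 product space is `ε`-orthonormal if all its elements are unit
vectors and any two distinct elements have inner 𝕜 product of magnitude at most `ε`. -/
def EpsOrthonormal {𝕜 : Type*} [RCLike 𝕜] {H : Type*} [NormedAddCommGroup H]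
    [InnerProductSpace 𝕜 H] (ε : ℝ) (S : Set H) : Prop :=
  (∀ v ∈ S, ‖v‖ = 1) ∧ ∀ v ∈ S, ∀ v' ∈ S, v ≠ v' → ‖(inner 𝕜 v v' : 𝕜)‖ ≤ ε

open Finset in
lemma bessel_aux {𝕜 : Type*} [RCLike 𝕜] {H : Type*} [NormedAddCommGroup H]
    [InnerProductSpace 𝕜 H] (u : H) (S : Finset H) (ε : ℝ) (hε : 0 ≤ ε)
    (hnorm : ∀ v ∈ S, ‖v‖ = 1)
    (hinner : ∀ v ∈ S, ∀ w ∈ S, v ≠ w → ‖(inner 𝕜 v w : 𝕜)‖ ≤ ε) :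
    ∑ v ∈ S, ‖(inner 𝕜 u v : 𝕜)‖ ^ 2 ≤ ‖u‖ ^ 2 * (1 + S.card * ε) := by
  classical
  set c : H → 𝕜 := fun v => inner 𝕜 v u with hc
  set t : ℝ := ∑ v ∈ S, ‖(inner 𝕜 u v : 𝕜)‖ ^ 2 with ht
  have ht0 : 0 ≤ t := Finset.sum_nonneg fun v _ => sq_nonneg _
  have hcnorm : ∀ v, ‖c v‖ = ‖(inner 𝕜 u v : 𝕜)‖ := fun v => (norm_inner_symm u v).symm
  set x : H := ∑ v ∈ S, c v • v with hx
  have h1 : (inner 𝕜 u x : 𝕜) = (t : 𝕜) := by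
    rw [hx, inner_sum]
    simp only [inner_smul_right, hc]
    rw [ht]
    push_cast
    refine Finset.sum_congr rfl fun v _ => ?_
    rw [← inner_conj_symm u v, RCLike.norm_conj]
    exact_mod_cast RCLike.mul_conj (inner 𝕜 v u : 𝕜)
  have hA : (∑ v ∈ S, ‖c v‖) ^ 2 ≤ (S.card : ℝ) * t := by
    calc (∑ v ∈ S, ‖c v‖) ^ 2 ≤ (S.card : ℝ) * ∑ v ∈ S, ‖c v‖ ^ 2 :=
        sq_sum_le_card_mul_sum_sq
      _ = (S.card : ℝ) * t := by
          rw [ht]; congr 1; exact Finset.sum_congr rfl fun v _ => by rw [hcnorm]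
  have h2 : ‖x‖ ^ 2 ≤ t + ε * ((S.card : ℝ) * t) := by
    have hxx : (inner 𝕜 x x : 𝕜) = ∑ v ∈ S, ∑ w ∈ S, (starRingEnd 𝕜) (c v) * (c w * inner 𝕜 v w) := by
      rw [hx, sum_inner]
      refine Finset.sum_congr rfl fun v _ => ?_
      rw [inner_smul_left, inner_sum, Finset.mul_sum]
      refine Finset.sum_congr rfl fun w _ => ?_
      rw [inner_smul_right]
    have hnx : ‖x‖ ^ 2 = ‖(inner 𝕜 x x : 𝕜)‖ := by
      rw [inner_self_eq_norm_sq_to_K]; simp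
    rw [hnx, hxx]
    calc ‖∑ v ∈ S, ∑ w ∈ S, (starRingEnd 𝕜) (c v) * (c w * inner 𝕜 v w)‖
        ≤ ∑ v ∈ S, ∑ w ∈ S, ‖(starRingEnd 𝕜) (c v) * (c w * (inner 𝕜 v w : 𝕜))‖ := by
          refine (norm_sum_le _ _).trans (Finset.sum_le_sum fun v _ => norm_sum_le _ _)
      _ ≤ ∑ v ∈ S, ∑ w ∈ S, ((if v = w then ‖c v‖ ^ 2 else 0) + ε * (‖c v‖ * ‖c w‖)) := by
          refine Finset.sum_le_sum fun v hv => Finset.sum_le_sum fun w hw => ?_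
          rw [norm_mul, norm_mul, RCLike.norm_conj]
          by_cases hvw : v = w
          · subst hvw
            simp only [if_pos rfl, if_true]
            have h11 : ‖(inner 𝕜 v v : 𝕜)‖ = 1 := by
              rw [inner_self_eq_norm_sq_to_K]; simp [hnorm v hv]
            rw [h11]
            nlinarith [norm_nonneg (c v), mul_nonneg hε (mul_nonneg (norm_nonneg (c v)) (norm_nonneg (c v)))]
          · simp only [if_neg hvw, zero_add]
            have := hinner v hv w hw hvw
            calc ‖c v‖ * (‖c w‖ * ‖(inner 𝕜 v w : 𝕜)‖) ≤ ‖c v‖ * (‖c w‖ * ε) := by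
                  gcongr
              _ = ε * (‖c v‖ * ‖c w‖) := by ring
      _ = t + ε * (∑ v ∈ S, ‖c v‖) ^ 2 := by
          simp only [Finset.sum_add_distrib]
          congr 1
          · rw [ht]
            refine Finset.sum_congr rfl fun v hv => ?_
            rw [Finset.sum_ite_eq S v fun _ => ‖c v‖ ^ 2, if_pos hv, hcnorm]
          · rw [sq, Finset.sum_mul_sum, Finset.mul_sum]
            refine Finset.sum_congr rfl fun v _ => ?_
            rw [Finset.mul_sum]
      _ ≤ t + ε * ((S.card : ℝ) * t) := by
          have := mul_le_mul_of_nonneg_left hA hε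
          linarith
  by_cases htz : t = 0
  · rw [htz]
    positivity
  · have htpos : 0 < t := lt_of_le_of_ne ht0 (Ne.symm htz)
    have hcs : t ≤ ‖u‖ * ‖x‖ := by
      calc t = ‖(inner 𝕜 u x : 𝕜)‖ := by rw [h1]; simp [abs_of_nonneg ht0]
        _ ≤ ‖u‖ * ‖x‖ := norm_inner_le_norm u x
    have hsq : t ^ 2 ≤ ‖u‖ ^ 2 * (t + ε * ((S.card : ℝ) * t)) := by
      nlinarith [norm_nonneg u, norm_nonneg x, sq_nonneg (‖u‖ * ‖x‖)]
    have hfin : t * t ≤ (‖u‖ ^ 2 * (1 + S.card * ε)) * t := by nlinarith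
    exact le_of_mul_le_mul_right hfin htpos

/-- Let `H` be a real (or complex) Hilbert space and `V ⊆ H` a set containing
an `ε`-orthonormal subset of size `n` for every `ε > 0` and `n ∈ ℕ`.  Then for every
`u ∈ H`, `inf { |⟪u, v⟫| : v ∈ V } = 0`. -/
theorem stmt1 {𝕜 : Type*} [RCLike 𝕜] {H : Type*} [NormedAddCommGroup H]
    [InnerProductSpace 𝕜 H] [CompleteSpace H] (V : Set H)
    (hV : ∀ ε > (0 : ℝ), ∀ n : ℕ, ∃ S : Finset H,
      ↑S ⊆ V ∧ S.card = n ∧ EpsOrthonormal (𝕜 := 𝕜) ε (S : Set H))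
    (u : H) :
    sInf ((fun v => ‖(inner 𝕜 u v : 𝕜)‖) '' V) = 0 := by
  have hlb : ∀ y ∈ (fun v => ‖(inner 𝕜 u v : 𝕜)‖) '' V, 0 ≤ y := by
    rintro y ⟨v, _, rfl⟩; exact norm_nonneg _
  have hne : ((fun v => ‖(inner 𝕜 u v : 𝕜)‖) '' V).Nonempty := by
    obtain ⟨S1, hS1V, hS1card, _⟩ := hV 1 one_pos 1
    obtain ⟨v, hv⟩ := Finset.card_pos.mp (by rw [hS1card]; norm_num)
    exact ⟨_, ⟨v, hS1V hv, rfl⟩⟩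
  refine le_antisymm (le_of_forall_pos_le_add fun δ hδ => ?_) (le_csInf hne hlb)
  rw [zero_add]
  -- find v ∈ V with ‖inner 𝕜 u v‖ ≤ δ
  set n : ℕ := ⌈2 * ‖u‖ ^ 2 / δ ^ 2⌉₊ + 1 with hn
  have hnpos : 0 < (n : ℝ) := by positivity
  have hngt : 2 * ‖u‖ ^ 2 / δ ^ 2 < (n : ℝ) := by
    calc 2 * ‖u‖ ^ 2 / δ ^ 2 ≤ (⌈2 * ‖u‖ ^ 2 / δ ^ 2⌉₊ : ℝ) := Nat.le_ceil _
      _ < (n : ℝ) := by rw [hn]; push_cast; linarith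
  obtain ⟨S, hSV, hScard, hSnorm, hSinner⟩ := hV ((n : ℝ)⁻¹) (by positivity) n
  have hbessel := bessel_aux (𝕜 := 𝕜) u S ((n : ℝ)⁻¹) (by positivity)
    (fun v hv => hSnorm v (by exact_mod_cast hv))
    (fun v hv w hw hvw => hSinner v (by exact_mod_cast hv) w (by exact_mod_cast hw) hvw)
  rw [hScard] at hbessel
  have hb2 : ∑ v ∈ S, ‖(inner 𝕜 u v : 𝕜)‖ ^ 2 ≤ 2 * ‖u‖ ^ 2 := by
    have : (n : ℝ) * (n : ℝ)⁻¹ = 1 := mul_inv_cancel₀ (ne_of_gt hnpos)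
    calc ∑ v ∈ S, ‖(inner 𝕜 u v : 𝕜)‖ ^ 2 ≤ ‖u‖ ^ 2 * (1 + (n : ℝ) * (n : ℝ)⁻¹) := hbessel
      _ = 2 * ‖u‖ ^ 2 := by rw [this]; ring
  have hSne : S.Nonempty := Finset.card_pos.mp (by rw [hScard]; omega)
  have hsum : ∑ v ∈ S, ‖(inner 𝕜 u v : 𝕜)‖ ^ 2 ≤ ∑ _v ∈ S, 2 * ‖u‖ ^ 2 / (n : ℝ) := by
    rw [Finset.sum_const, hScard, nsmul_eq_mul]
    have hne' : (n : ℝ) ≠ 0 := ne_of_gt hnpos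
    calc ∑ v ∈ S, ‖(inner 𝕜 u v : 𝕜)‖ ^ 2 ≤ 2 * ‖u‖ ^ 2 := hb2
      _ = (n : ℝ) * (2 * ‖u‖ ^ 2 / (n : ℝ)) := by field_simp
  obtain ⟨v, hvS, hvle⟩ := Finset.exists_le_of_sum_le hSne hsum
  have hv2 : ‖(inner 𝕜 u v : 𝕜)‖ ^ 2 < δ ^ 2 := by
    have hlt : 2 * ‖u‖ ^ 2 / (n : ℝ) < δ ^ 2 := by
      rw [div_lt_iff₀ hnpos]
      calc 2 * ‖u‖ ^ 2 = (2 * ‖u‖ ^ 2 / δ ^ 2) * δ ^ 2 := by field_simp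
        _ < (n : ℝ) * δ ^ 2 := by gcongr
        _ = δ ^ 2 * (n : ℝ) := by ring
    linarith
  have hvδ : ‖(inner 𝕜 u v : 𝕜)‖ ≤ δ := by nlinarith [norm_nonneg ((inner 𝕜 u v : 𝕜))]
  exact (csInf_le ⟨0, hlb⟩ ⟨v, hSV hvS, rfl⟩).trans hvδ
end

section
/- Let H be a Hilbert space, n ∈ ℕ with n ≥ 1, and 0 < ε < 1/(n−1). Let v_1, …, v_n ∈ H be an ε-orthonormal set, let u ∈ H with ‖u‖ = M, and suppose there is c ≥ 0 with |⟪u, v_j⟫| ≥ c for every j = 1, …, n. Then M² ≥ ((1 − (n−1)·ε) / (1 + (n−1)·ε)²) · c² · n. -/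
/-- Let `H` be a Hilbert space, `n ≥ 1`, and `0 < ε < 1/(n-1)` (encoded as
`ε * (n - 1) < 1`).  Let `v 1, …, v n ∈ H` be an `ε`-orthonormal set (unit vectors with
pairwise inner products of magnitude at most `ε`), let `u ∈ H` with `‖u‖ = M`, and
suppose `c ≥ 0` satisfies `|⟪u, v j⟫| ≥ c` for every `j`.  Then
`M² ≥ ((1 - (n-1)·ε) / (1 + (n-1)·ε)²) · c² · n`. -/
theorem stmt3 {𝕜 : Type*} [RCLike 𝕜] {H : Type*} [NormedAddCommGroup H]
    [InnerProductSpace 𝕜 H] [CompleteSpace H]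
    (n : ℕ) (hn : 1 ≤ n) (ε : ℝ) (hε : 0 < ε) (hε' : ε * ((n : ℝ) - 1) < 1)
    (v : Fin n → H)
    (hinj : Function.Injective v)
    (hnorm : ∀ i, ‖v i‖ = 1)
    (horth : ∀ i j, i ≠ j → ‖(inner 𝕜 (v i) (v j) : 𝕜)‖ ≤ ε)
    (u : H) (M : ℝ) (hM : ‖u‖ = M)
    (c : ℝ) (hc : 0 ≤ c)
    (hlow : ∀ j, c ≤ ‖(inner 𝕜 u (v j) : 𝕜)‖) :
    ((1 - ((n : ℝ) - 1) * ε) / (1 + ((n : ℝ) - 1) * ε) ^ 2) * c ^ 2 * n ≤ M ^ 2 := by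
  have hn1 : (1:ℝ) ≤ (n:ℝ) := by exact_mod_cast hn
  have hnpos : (0:ℝ) < (n:ℝ) := by linarith
  set x : ℝ := ((n : ℝ) - 1) * ε with hxdef
  have hx0 : 0 ≤ x := mul_nonneg (by linarith) hε.le
  have hM0 : 0 ≤ M := hM ▸ norm_nonneg u
  rcases eq_or_lt_of_le hc with hc0 | hc0
  · rw [← hc0]
    simp only [ne_eq, OfNat.ofNat_ne_zero, not_false_eq_true, zero_pow, mul_zero, zero_mul]
    positivity
  -- main case : c > 0
  set b : Fin n → 𝕜 := fun j => (inner 𝕜 u (v j) : 𝕜) with hbdef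
  have hb : ∀ j, b j ≠ 0 := by
    intro j h
    have h2 : c ≤ ‖b j‖ := hlow j
    rw [h] at h2
    simp at h2
    linarith
  set α : Fin n → 𝕜 := fun j => (starRingEnd 𝕜) (b j) / (‖b j‖ : 𝕜) with hαdef
  have hα : ∀ j, ‖α j‖ = 1 := by
    intro j
    have h1 : (0:ℝ) < ‖b j‖ := norm_pos_iff.mpr (hb j)
    rw [hαdef]
    simp only [norm_div, RCLike.norm_conj, RCLike.norm_ofReal, abs_of_pos h1]
    field_simp
  set w : H := ∑ j, α j • v j with hwdef
  -- inner product of u with w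
  have h1 : (inner 𝕜 u w : 𝕜) = ∑ j, (‖b j‖ : 𝕜) := by
    rw [hwdef, inner_sum]
    refine Finset.sum_congr rfl fun j _ => ?_
    rw [inner_smul_right]
    have hbne : ((‖b j‖ : ℝ) : 𝕜) ≠ 0 := by
      simp [norm_eq_zero, hb j]
    rw [hαdef]
    field_simp
    rw [mul_comm]
    rw [RCLike.mul_conj]
  have h2 : (n : ℝ) * c ≤ ‖(inner 𝕜 u w : 𝕜)‖ := by
    rw [h1]
    have : (∑ j, (‖b j‖ : 𝕜)) = ((∑ j, ‖b j‖ : ℝ) : 𝕜) := by push_cast; ring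
    rw [this, RCLike.norm_ofReal, abs_of_nonneg (Finset.sum_nonneg fun j _ => norm_nonneg _)]
    calc (n : ℝ) * c = ∑ _j : Fin n, c := by simp [mul_comm]
    _ ≤ ∑ j, ‖b j‖ := Finset.sum_le_sum fun j _ => hlow j
  -- norm of w squared
  have h3 : ‖w‖ ^ 2 ≤ (n : ℝ) * (1 + x) := by
    have hre : ‖w‖ ^ 2 = RCLike.re (inner 𝕜 w w : 𝕜) := by
      rw [← inner_self_eq_norm_sq (𝕜 := 𝕜)]
    have hle : RCLike.re (inner 𝕜 w w : 𝕜) ≤ ‖(inner 𝕜 w w : 𝕜)‖ := RCLike.re_le_norm _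
    have hexp : ‖(inner 𝕜 w w : 𝕜)‖ ≤ ∑ i, ∑ j, ‖(inner 𝕜 (α i • v i) (α j • v j) : 𝕜)‖ := by
      rw [hwdef, sum_inner]
      refine le_trans (norm_sum_le _ _) (Finset.sum_le_sum fun i _ => ?_)
      rw [inner_sum]
      exact norm_sum_le _ _
    have hterm : ∀ i j, ‖(inner 𝕜 (α i • v i) (α j • v j) : 𝕜)‖ = ‖(inner 𝕜 (v i) (v j) : 𝕜)‖ := by
      intro i j
      rw [inner_smul_left, inner_smul_right, norm_mul, norm_mul, RCLike.norm_conj, hα, hα]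
      ring
    have hrow : ∀ i : Fin n, ∑ j, ‖(inner 𝕜 (v i) (v j) : 𝕜)‖ ≤ 1 + x := by
      intro i
      rw [← Finset.add_sum_erase _ _ (Finset.mem_univ i)]
      have hd : ‖(inner 𝕜 (v i) (v i) : 𝕜)‖ = 1 := by
        rw [inner_self_eq_norm_sq_to_K]
        simp [hnorm i]
      rw [hd]
      have : ∑ j ∈ Finset.univ.erase i, ‖(inner 𝕜 (v i) (v j) : 𝕜)‖ ≤
          ∑ _j ∈ Finset.univ.erase i, ε :=
        Finset.sum_le_sum fun j hj => horth i j (Ne.symm (Finset.ne_of_mem_erase hj))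
      have hcard : ((Finset.univ.erase i).card : ℝ) = (n : ℝ) - 1 := by
        rw [Finset.card_erase_of_mem (Finset.mem_univ i)]
        simp only [Finset.card_univ, Fintype.card_fin]
        rw [Nat.cast_sub hn]
        simp
      rw [Finset.sum_const, nsmul_eq_mul, hcard] at this
      linarith
    calc ‖w‖ ^ 2 ≤ ‖(inner 𝕜 w w : 𝕜)‖ := by rw [hre]; exact hle
    _ ≤ ∑ i, ∑ j, ‖(inner 𝕜 (α i • v i) (α j • v j) : 𝕜)‖ := hexp
    _ = ∑ i, ∑ j, ‖(inner 𝕜 (v i) (v j) : 𝕜)‖ := by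
        refine Finset.sum_congr rfl fun i _ => Finset.sum_congr rfl fun j _ => hterm i j
    _ ≤ ∑ _i : Fin n, (1 + x) := Finset.sum_le_sum fun i _ => hrow i
    _ = (n : ℝ) * (1 + x) := by simp [mul_comm]; ring
  -- Cauchy-Schwarz
  have hcs : ‖(inner 𝕜 u w : 𝕜)‖ ≤ M * ‖w‖ := by
    rw [← hM]; exact norm_inner_le_norm u w
  have hw0 : 0 ≤ ‖w‖ := norm_nonneg w
  have hbig : ((n : ℝ) * c) ^ 2 ≤ M ^ 2 * ((n : ℝ) * (1 + x)) := by
    have h4 : (n : ℝ) * c ≤ M * ‖w‖ := le_trans h2 hcs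
    have h5 : ((n : ℝ) * c) ^ 2 ≤ (M * ‖w‖) ^ 2 := by
      apply sq_le_sq' <;> nlinarith
    calc ((n : ℝ) * c) ^ 2 ≤ (M * ‖w‖) ^ 2 := h5
    _ = M ^ 2 * ‖w‖ ^ 2 := by ring
    _ ≤ M ^ 2 * ((n : ℝ) * (1 + x)) := by nlinarith [sq_nonneg M]
  have key : (n : ℝ) * c ^ 2 ≤ M ^ 2 * (1 + x) := by nlinarith
  have hx1 : 0 < 1 + x := by linarith
  rw [div_mul_eq_mul_div, div_mul_eq_mul_div, div_le_iff₀ (by positivity)]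
  have hk2 := mul_le_mul_of_nonneg_right key hx1.le
  nlinarith [mul_nonneg hx0 (mul_nonneg (sq_nonneg c) hnpos.le)]
end

section
/- For any dimension d ∈ ℕ, any ξ > 0, and any fixed p with 0 < p ≤ 2, the Generalized Gaussian kernel K_{l_p}(x, z) = exp(−ξ · Σ_{i=1}^d |x_i − z_i|^p) is a positive semidefinite kernel on ℝ^d: it is symmetric, and for every finite collection of points x_1, …, x_m ∈ ℝ^d, the m × m Gram matrix with entries exp(−ξ · Σ_{k=1}^d |(x_i)_k − (x_j)_k|^p) is positive semidefinite. -/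
section Alg
open Real Finset Matrix Nat

def Psdk {m : ℕ} (K : Fin m → Fin m → ℝ) : Prop :=
  ∀ c : Fin m → ℝ, 0 ≤ ∑ i, ∑ j, c i * c j * K i j

lemma psdk_const {m : ℕ} {a : ℝ} (ha : 0 ≤ a) : Psdk (fun _ _ : Fin m => a) := by
  intro c
  have h : ∑ i, ∑ j, c i * c j * a = (∑ i, c i) * (∑ j, c j) * a := by
    rw [Finset.sum_mul_sum, Finset.sum_mul]
    exact Finset.sum_congr rfl fun i _ => by rw [Finset.sum_mul]
  rw [h]
  have := mul_self_nonneg (∑ i, c i)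
  positivity

/-- Schur product theorem, kernel form. -/
lemma psdk_mul {m : ℕ} {K1 K2 : Fin m → Fin m → ℝ} (h1 : Psdk K1) (h2 : Psdk K2)
    (h2s : ∀ i j, K2 i j = K2 j i) : Psdk (fun i j => K1 i j * K2 i j) := by
  intro c
  simp only
  have hM : (Matrix.of K2).PosSemidef := by
    refine Matrix.PosSemidef.of_dotProduct_mulVec_nonneg ?_ ?_
    · ext i j
      simp [Matrix.conjTranspose_apply, h2s i j]
    · intro x
      have hq : dotProduct (star x) ((Matrix.of K2).mulVec x)
          = ∑ i, ∑ j, x i * x j * K2 i j := by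
        simp [dotProduct, Matrix.mulVec, Finset.mul_sum]
        exact Finset.sum_congr rfl fun i _ => Finset.sum_congr rfl fun j _ => by ring
      rw [hq]
      exact h2 x
  obtain ⟨k, B, hB⟩ := Matrix.posSemidef_iff_eq_sum_vecMulVec.mp hM
  have hK2 : ∀ i j, K2 i j = ∑ r, B r i * B r j := by
    intro i j
    have h := congrFun (congrFun hB i) j
    simpa [Matrix.sum_apply, Matrix.vecMulVec_apply] using h
  calc (0:ℝ) ≤ ∑ r, ∑ i, ∑ j, (c i * B r i) * (c j * B r j) * K1 i j :=
        Finset.sum_nonneg fun r _ => h1 (fun i => c i * B r i)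
    _ = ∑ i, ∑ j, c i * c j * (K1 i j * K2 i j) := by
        rw [Finset.sum_comm]
        refine Finset.sum_congr rfl fun i _ => ?_
        rw [Finset.sum_comm]
        refine Finset.sum_congr rfl fun j _ => ?_
        simp only [hK2 i j, Finset.mul_sum]
        exact Finset.sum_congr rfl fun r _ => by ring



lemma psdk_pow {m : ℕ} {K : Fin m → Fin m → ℝ} (h : Psdk K)
    (hs : ∀ i j, K i j = K j i) (n : ℕ) : Psdk (fun i j => K i j ^ n) := by
  induction n with
  | zero => simpa using psdk_const (m := m) zero_le_one
  | succ n ih =>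
      have := psdk_mul ih h hs
      simpa [pow_succ] using this

lemma psdk_exp {m : ℕ} {K : Fin m → Fin m → ℝ} (h : Psdk K)
    (hs : ∀ i j, K i j = K j i) : Psdk (fun i j => Real.exp (K i j)) := by
  intro c
  have hexp : ∀ x : ℝ, Real.exp x = (∑' (n : ℕ), x ^ n / (n ! : ℝ)) := by
    intro x
    rw [Real.exp_eq_exp_ℝ, NormedSpace.exp_eq_tsum_div]
  have hsum : ∀ (i j : Fin m), Summable (fun n : ℕ => c i * c j * (K i j ^ n / n !)) :=
    fun i j => (Real.summable_pow_div_factorial (K i j)).mul_left _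
  calc (0:ℝ) ≤ ∑' (n : ℕ), ∑ ij : Fin m × Fin m, (c ij.1 * c ij.2 * (K ij.1 ij.2 ^ n / n !)) := by
        refine tsum_nonneg fun n => ?_
        have h0 : 0 ≤ ∑ i, ∑ j, c i * c j * (K i j ^ n) := psdk_pow h hs n c
        rw [Fintype.sum_prod_type]
        have : ∀ i j : Fin m, c i * c j * (K i j ^ n / n !) = (c i * c j * K i j ^ n) * (1 / n !) := by
          intro i j; ring
        simp only [this, ← Finset.sum_mul]
        positivity
    _ = ∑ ij : Fin m × Fin m, ∑' (n : ℕ), (c ij.1 * c ij.2 * (K ij.1 ij.2 ^ n / n !)) := by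
        exact Summable.tsum_finsetSum fun ij _ => hsum ij.1 ij.2
    _ = ∑ i, ∑ j, c i * c j * Real.exp (K i j) := by
        rw [Fintype.sum_prod_type]
        refine Finset.sum_congr rfl fun i _ => Finset.sum_congr rfl fun j _ => ?_
        rw [hexp, ← tsum_mul_left]

lemma psdk_scale {m : ℕ} {K : Fin m → Fin m → ℝ} (h : Psdk K) (d : Fin m → ℝ) :
    Psdk (fun i j => d i * K i j * d j) := by
  intro c
  have := h (fun i => c i * d i)
  calc (0:ℝ) ≤ ∑ i, ∑ j, (c i * d i) * (c j * d j) * K i j := this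
    _ = ∑ i, ∑ j, c i * c j * (d i * K i j * d j) :=
        Finset.sum_congr rfl fun i _ => Finset.sum_congr rfl fun j _ => by ring

lemma psdk_cos {m : ℕ} (t : Fin m → ℝ) : Psdk (fun i j => Real.cos (t i - t j)) := by
  intro c
  have : ∑ i, ∑ j, c i * c j * Real.cos (t i - t j)
      = (∑ i, c i * Real.cos (t i)) ^ 2 + (∑ i, c i * Real.sin (t i)) ^ 2 := by
    rw [sq, sq, Finset.sum_mul_sum, Finset.sum_mul_sum, ← Finset.sum_add_distrib]
    refine Finset.sum_congr rfl fun i _ => ?_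
    rw [← Finset.sum_add_distrib]
    refine Finset.sum_congr rfl fun j _ => ?_
    rw [Real.cos_sub]
    ring
  rw [this]
  positivity

end Alg

section Ana
open Real MeasureTheory Set Nat

lemma one_sub_cos_nonneg (x : ℝ) : 0 ≤ 1 - Real.cos x := by
  linarith [Real.cos_le_one x]

lemma one_sub_cos_le_sq (x : ℝ) : 1 - Real.cos x ≤ x ^ 2 / 2 := by
  linarith [Real.one_sub_sq_div_two_le_cos (x := x)]

lemma one_sub_cos_le_two (x : ℝ) : 1 - Real.cos x ≤ 2 := by
  linarith [Real.neg_one_le_cos x]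

lemma kern_meas (p a : ℝ) :
    Measurable (fun s : ℝ => (1 - Real.cos (a * s)) * s ^ (-1 - p)) := by
  exact ((measurable_const.sub ((Real.continuous_cos.comp
    (continuous_const.mul continuous_id)).measurable)).mul
    (measurable_id.pow_const _))

lemma integrableOn_kern {p : ℝ} (hp : 0 < p) (hp2 : p < 2) (a : ℝ) :
    IntegrableOn (fun s => (1 - Real.cos (a * s)) * s ^ (-1 - p)) (Ioi (0:ℝ)) := by
  have hmeas := kern_meas p a
  rw [show Ioi (0:ℝ) = Ioc 0 1 ∪ Ioi 1 from (Ioc_union_Ioi_eq_Ioi (by norm_num)).symm]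
  apply IntegrableOn.union
  · have hg : IntegrableOn (fun s : ℝ => a ^ 2 / 2 * s ^ (1 - p)) (Ioc (0:ℝ) 1) := by
      apply Integrable.const_mul
      have h := intervalIntegral.intervalIntegrable_rpow' (r := 1 - p) (a := 0) (b := 1)
        (by linarith)
      rwa [intervalIntegrable_iff_integrableOn_Ioc_of_le (by norm_num)] at h
    refine Integrable.mono hg hmeas.aestronglyMeasurable.restrict ?_
    rw [ae_restrict_iff' measurableSet_Ioc]
    refine Filter.Eventually.of_forall fun s hs => ?_
    have hs0 : 0 < s := hs.1
    rw [Real.norm_eq_abs, Real.norm_eq_abs,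
      abs_of_nonneg (mul_nonneg (one_sub_cos_nonneg _) (Real.rpow_nonneg hs0.le _)),
      abs_of_nonneg (by positivity : (0:ℝ) ≤ a ^ 2 / 2 * s ^ (1 - p))]
    have h1 : 1 - Real.cos (a * s) ≤ a ^ 2 / 2 * s ^ (2:ℕ) := by
      have := one_sub_cos_le_sq (a * s)
      calc 1 - Real.cos (a * s) ≤ (a * s) ^ 2 / 2 := this
        _ = a ^ 2 / 2 * s ^ (2:ℕ) := by ring
    calc (1 - Real.cos (a * s)) * s ^ (-1 - p)
        ≤ (a ^ 2 / 2 * s ^ (2:ℕ)) * s ^ (-1 - p) :=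
          mul_le_mul_of_nonneg_right h1 (Real.rpow_nonneg hs0.le _)
      _ = a ^ 2 / 2 * s ^ (1 - p) := by
          rw [mul_assoc, ← Real.rpow_natCast s 2, ← Real.rpow_add hs0]
          norm_num
          left
          congr 1
          ring
  · have hg : IntegrableOn (fun s : ℝ => 2 * s ^ (-1 - p)) (Ioi (1:ℝ)) :=
      (integrableOn_Ioi_rpow_of_lt (by linarith) one_pos).const_mul 2
    refine Integrable.mono hg hmeas.aestronglyMeasurable.restrict ?_
    rw [ae_restrict_iff' measurableSet_Ioi]
    refine Filter.Eventually.of_forall fun s hs => ?_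
    have hs0 : (0:ℝ) < s := lt_trans one_pos hs
    rw [Real.norm_eq_abs, Real.norm_eq_abs,
      abs_of_nonneg (mul_nonneg (one_sub_cos_nonneg _) (Real.rpow_nonneg hs0.le _)),
      abs_of_nonneg (by positivity : (0:ℝ) ≤ 2 * s ^ (-1 - p))]
    exact mul_le_mul_of_nonneg_right (one_sub_cos_le_two _) (Real.rpow_nonneg hs0.le _)



noncomputable def Ipc (p : ℝ) : ℝ := ∫ s in Ioi (0:ℝ), (1 - Real.cos s) * s ^ (-1 - p)

lemma Ipc_pos {p : ℝ} (hp : 0 < p) (hp2 : p < 2) : 0 < Ipc p := by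
  have hint : IntegrableOn (fun s => (1 - Real.cos s) * s ^ (-1 - p)) (Ioi (0:ℝ)) := by
    have h := integrableOn_kern hp hp2 1
    simpa using h
  have hIoc : IntegrableOn (fun s => (1 - Real.cos s) * s ^ (-1 - p)) (Ioc (1:ℝ) 2) :=
    hint.mono_set (fun x hx => lt_trans one_pos hx.1)
  have hpos : 0 < ∫ s in (1:ℝ)..2, (1 - Real.cos s) * s ^ (-1 - p) := by
    apply intervalIntegral.intervalIntegral_pos_of_pos_on
    · rw [intervalIntegrable_iff_integrableOn_Ioc_of_le one_le_two]; exact hIoc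
    · intro x hx
      have hx0 : (0:ℝ) < x := lt_trans one_pos hx.1
      have hcos : Real.cos x < 1 := by
        rcases lt_or_eq_of_le (Real.cos_le_one x) with h | h
        · exact h
        · exfalso
          obtain ⟨n, hn⟩ := (Real.cos_eq_one_iff x).mp h
          have hpi := Real.pi_gt_three
          rcases le_or_gt n 0 with hn0 | hn0
          · have : (n:ℝ) ≤ 0 := Int.cast_nonpos.mpr hn0
            nlinarith [hx.1, Real.pi_pos]
          · have : (1:ℝ) ≤ (n:ℝ) := by exact_mod_cast hn0
            nlinarith [hx.2]
      have h2 := Real.rpow_pos_of_pos hx0 (-1 - p)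
      have h1 : 0 < 1 - Real.cos x := by linarith
      positivity
    · norm_num
  have heq : ∫ s in (1:ℝ)..2, (1 - Real.cos s) * s ^ (-1 - p)
      = ∫ s in Ioc (1:ℝ) 2, (1 - Real.cos s) * s ^ (-1 - p) := by
    rw [intervalIntegral.integral_of_le one_le_two]
  have hmono : ∫ s in Ioc (1:ℝ) 2, (1 - Real.cos s) * s ^ (-1 - p) ≤ Ipc p := by
    apply setIntegral_mono_set hint
    · rw [Filter.EventuallyLE, ae_restrict_iff' measurableSet_Ioi]
      refine Filter.Eventually.of_forall fun s hs => ?_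
      exact mul_nonneg (one_sub_cos_nonneg s) (Real.rpow_nonneg (le_of_lt hs) _)
    · exact HasSubset.Subset.eventuallyLE (fun x hx => lt_trans one_pos hx.1)
  rw [heq] at hpos
  exact lt_of_lt_of_le hpos hmono



lemma kern_value {p : ℝ} (hp : 0 < p) (hp2 : p < 2) (u : ℝ) :
    ∫ s in Ioi (0:ℝ), (1 - Real.cos (u * s)) * s ^ (-1 - p) = |u| ^ p * Ipc p := by
  rcases eq_or_ne u 0 with h | h
  · simp [h, Real.zero_rpow hp.ne']
  · have hb : (0:ℝ) < |u| := abs_pos.mpr h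
    have hcos : ∀ s : ℝ, Real.cos (u * s) = Real.cos (|u| * s) := by
      intro s
      rcases abs_cases u with ⟨h1, _⟩ | ⟨h1, _⟩ <;> rw [h1]
      rw [neg_mul, Real.cos_neg]
    have key : EqOn (fun s => (1 - Real.cos (u * s)) * s ^ (-1 - p))
        (fun s => |u| ^ (1 + p) * ((1 - Real.cos (|u| * s)) * (|u| * s) ^ (-1 - p)))
        (Ioi (0:ℝ)) := by
      intro s hs
      simp only
      rw [Real.mul_rpow hb.le (le_of_lt hs), hcos]
      have : |u| ^ (1 + p) * ((1 - Real.cos (|u| * s)) * (|u| ^ (-1 - p) * s ^ (-1 - p)))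
          = (|u| ^ (1 + p) * |u| ^ (-1 - p)) * ((1 - Real.cos (|u| * s)) * s ^ (-1 - p)) := by
        ring
      rw [this, ← Real.rpow_add hb]
      norm_num
    rw [setIntegral_congr_fun measurableSet_Ioi key, integral_const_mul]
    have hsub := MeasureTheory.integral_comp_mul_left_Ioi
      (fun y => (1 - Real.cos y) * y ^ (-1 - p)) 0 hb
    rw [mul_zero] at hsub
    rw [hsub, smul_eq_mul, ← mul_assoc]
    have : |u| ^ (1 + p) * |u|⁻¹ = |u| ^ p := by
      rw [← Real.rpow_neg_one |u|, ← Real.rpow_add hb]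
      norm_num
    rw [this]
    rfl

end Ana

section ND
open Real MeasureTheory Set Nat Finset


lemma negdef_lt {p : ℝ} (hp : 0 < p) (hp2 : p < 2) {M : ℕ} (t c : Fin M → ℝ)
    (hc : ∑ i, c i = 0) : ∑ i, ∑ j, c i * c j * |t i - t j| ^ p ≤ 0 := by
  set F : (Fin M × Fin M) → ℝ → ℝ :=
    fun ij s => c ij.1 * c ij.2 * ((1 - Real.cos ((t ij.1 - t ij.2) * s)) * s ^ (-1 - p)) with hF
  have hInt : ∀ ij : Fin M × Fin M, IntegrableOn (F ij) (Ioi (0:ℝ)) :=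
    fun ij => (integrableOn_kern hp hp2 (t ij.1 - t ij.2)).const_mul _
  have hIpos := Ipc_pos hp hp2
  have step1 : ∑ i, ∑ j, c i * c j * |t i - t j| ^ p
      = (Ipc p)⁻¹ * ∑ ij : Fin M × Fin M, ∫ s in Ioi (0:ℝ), F ij s := by
    rw [Fintype.sum_prod_type, Finset.mul_sum]
    refine Finset.sum_congr rfl fun i _ => ?_
    rw [Finset.mul_sum]
    refine Finset.sum_congr rfl fun j _ => ?_
    rw [hF]
    simp only
    rw [integral_const_mul, kern_value hp hp2]
    field_simp
  have step2 : ∑ ij : Fin M × Fin M, ∫ s in Ioi (0:ℝ), F ij s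
      = ∫ s in Ioi (0:ℝ), ∑ ij : Fin M × Fin M, F ij s :=
    (integral_finset_sum Finset.univ fun ij _ => hInt ij).symm
  have step3 : ∫ s in Ioi (0:ℝ), ∑ ij : Fin M × Fin M, F ij s ≤ 0 := by
    apply setIntegral_nonpos measurableSet_Ioi
    intro s hs
    have hps := Real.rpow_nonneg (le_of_lt (mem_Ioi.mp hs)) (-1 - p)
    have hcos := psdk_cos (fun i => t i * s) c
    have expand : ∑ ij : Fin M × Fin M, F ij s
        = ((∑ i, c i) * (∑ j, c j) - ∑ i, ∑ j, c i * c j * Real.cos (t i * s - t j * s))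
          * s ^ (-1 - p) := by
      rw [Fintype.sum_prod_type, Finset.sum_mul_sum, ← Finset.sum_sub_distrib,
        Finset.sum_mul]
      refine Finset.sum_congr rfl fun i _ => ?_
      rw [← Finset.sum_sub_distrib, Finset.sum_mul]
      refine Finset.sum_congr rfl fun j _ => ?_
      rw [hF]
      simp only
      rw [show t i * s - t j * s = (t i - t j) * s by ring]
      ring
    rw [expand, hc]
    simp only [zero_mul, zero_sub]
    exact mul_nonpos_of_nonpos_of_nonneg (neg_nonpos.mpr hcos) hps
  rw [step1, step2]
  exact mul_nonpos_of_nonneg_of_nonpos (le_of_lt (inv_pos.mpr hIpos)) step3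

lemma negdef {p : ℝ} (hp : 0 < p) (hp2 : p ≤ 2) {M : ℕ} (t c : Fin M → ℝ)
    (hc : ∑ i, c i = 0) : ∑ i, ∑ j, c i * c j * |t i - t j| ^ p ≤ 0 := by
  rcases lt_or_eq_of_le hp2 with h | h
  · exact negdef_lt hp h t c hc
  · subst h
    have habs : ∀ i j : Fin M, |t i - t j| ^ (2:ℝ) = t i ^ 2 - 2 * (t i * t j) + t j ^ 2 := by
      intro i j
      rw [show (2:ℝ) = ((2:ℕ):ℝ) by norm_num, Real.rpow_natCast, sq_abs]
      ring
    have inner : ∀ i, ∑ j, c i * c j * |t i - t j| ^ (2:ℝ)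
        = c i * t i ^ 2 * (∑ j, c j) - 2 * (c i * t i) * (∑ j, c j * t j)
          + c i * (∑ j, c j * t j ^ 2) := by
      intro i
      rw [Finset.mul_sum, Finset.mul_sum, Finset.mul_sum, ← Finset.sum_sub_distrib,
        ← Finset.sum_add_distrib]
      exact Finset.sum_congr rfl fun j _ => by rw [habs i j]; ring
    calc ∑ i, ∑ j, c i * c j * |t i - t j| ^ (2:ℝ)
        = ∑ i, (c i * t i ^ 2 * (∑ j, c j) - 2 * (c i * t i) * (∑ j, c j * t j)
          + c i * (∑ j, c j * t j ^ 2)) := Finset.sum_congr rfl fun i _ => inner i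
      _ = -(2 * (∑ i, c i * t i) * (∑ i, c i * t i)) + (∑ i, c i) * (∑ j, c j * t j ^ 2) := by
          simp only [hc, mul_zero, zero_sub]
          rw [Finset.sum_add_distrib, ← Finset.sum_mul, hc, Finset.sum_neg_distrib,
            ← Finset.sum_mul, ← Finset.mul_sum]
      _ ≤ 0 := by
          rw [hc, zero_mul, add_zero]
          nlinarith [sq_nonneg (∑ i, c i * t i)]

end ND

section Sch
open Real Finset Matrix Nat



lemma psdk_expneg {ξ p : ℝ} (hξ : 0 < ξ) (hp : 0 < p)
    (nd : ∀ {M : ℕ} (t c : Fin M → ℝ), ∑ i, c i = 0 →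
      ∑ i, ∑ j, c i * c j * |t i - t j| ^ p ≤ 0)
    {m : ℕ} (t : Fin m → ℝ) : Psdk (fun i j => Real.exp (-ξ * |t i - t j| ^ p)) := by
  have hKpsd : Psdk (fun i j => ξ * (|t i| ^ p + |t j| ^ p - |t i - t j| ^ p)) := by
    intro c
    simp only
    set S := ∑ i, c i with hS
    set T := ∑ i, c i * |t i| ^ p with hT
    set N := ∑ i, ∑ j, c i * c j * |t i - t j| ^ p with hN
    set c' : Fin (m+1) → ℝ := Fin.cons (-S) c with hc'
    set t' : Fin (m+1) → ℝ := Fin.cons 0 t with ht'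
    have hsum0 : ∑ i, c' i = 0 := by
      rw [hc', Fin.sum_univ_succ]
      simp [hS]
    have h := nd t' c' hsum0
    have hexp : ∑ i, ∑ j, c' i * c' j * |t' i - t' j| ^ p = -S * T + (-S * T + N) := by
      rw [Fin.sum_univ_succ]
      congr 1
      · rw [Fin.sum_univ_succ]
        simp only [hc', ht', Fin.cons_zero, Fin.cons_succ, sub_self, abs_zero,
          Real.zero_rpow hp.ne', mul_zero, zero_add, zero_sub, abs_neg]
        calc ∑ j, -S * c j * |t j| ^ p = ∑ j, -S * (c j * |t j| ^ p) :=
              Finset.sum_congr rfl fun j _ => by ring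
          _ = -S * T := by rw [← Finset.mul_sum, ← hT]
      · calc ∑ i : Fin m, ∑ j, c' i.succ * c' j * |t' i.succ - t' j| ^ p
            = ∑ i : Fin m, (-S * (c i * |t i| ^ p) + ∑ j, c i * c j * |t i - t j| ^ p) := by
              refine Finset.sum_congr rfl fun i _ => ?_
              rw [Fin.sum_univ_succ]
              simp only [hc', ht', Fin.cons_zero, Fin.cons_succ, sub_zero]
              congr 1
              ring
          _ = -S * T + N := by
              rw [Finset.sum_add_distrib, ← Finset.mul_sum, ← hT, ← hN]
    rw [hexp] at h
    have hgoal : ∑ i, ∑ j, c i * c j * (ξ * (|t i| ^ p + |t j| ^ p - |t i - t j| ^ p))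
        = ξ * S * T + ξ * T * S - ξ * N := by
      calc ∑ i, ∑ j, c i * c j * (ξ * (|t i| ^ p + |t j| ^ p - |t i - t j| ^ p))
          = ∑ i, ((ξ * (c i * |t i| ^ p)) * S + (ξ * c i) * T
              - ξ * ∑ j, c i * c j * |t i - t j| ^ p) := by
            refine Finset.sum_congr rfl fun i _ => ?_
            calc ∑ j, c i * c j * (ξ * (|t i| ^ p + |t j| ^ p - |t i - t j| ^ p))
                = ∑ j, ((ξ * (c i * |t i| ^ p)) * c j + (ξ * c i) * (c j * |t j| ^ p)
                    - ξ * (c i * c j * |t i - t j| ^ p)) :=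
                  Finset.sum_congr rfl fun j _ => by ring
              _ = (ξ * (c i * |t i| ^ p)) * S + (ξ * c i) * T
                  - ξ * ∑ j, c i * c j * |t i - t j| ^ p := by
                  rw [Finset.sum_sub_distrib, Finset.sum_add_distrib, ← Finset.mul_sum,
                    ← Finset.mul_sum, ← Finset.mul_sum, ← hS, ← hT]
        _ = ξ * S * T + ξ * T * S - ξ * N := by
            calc ∑ i, ((ξ * (c i * |t i| ^ p)) * S + (ξ * c i) * T
                - ξ * ∑ j, c i * c j * |t i - t j| ^ p)
                = ∑ i, ((ξ * S) * (c i * |t i| ^ p) + (ξ * T) * c i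
                  - ξ * ∑ j, c i * c j * |t i - t j| ^ p) :=
                  Finset.sum_congr rfl fun i _ => by ring
              _ = (ξ * S) * T + (ξ * T) * S - ξ * N := by
                  rw [Finset.sum_sub_distrib, Finset.sum_add_distrib, ← Finset.mul_sum,
                    ← Finset.mul_sum, ← Finset.mul_sum, ← hS, ← hT, ← hN]
              _ = ξ * S * T + ξ * T * S - ξ * N := by ring
    rw [hgoal]
    have h2 : 0 ≤ S * T + T * S - N := by nlinarith
    nlinarith
  have hKsym : ∀ i j, ξ * (|t i| ^ p + |t j| ^ p - |t i - t j| ^ p)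
      = ξ * (|t j| ^ p + |t i| ^ p - |t j - t i| ^ p) := by
    intro i j
    rw [abs_sub_comm]
    ring
  have hE := psdk_scale (psdk_exp hKpsd hKsym) (fun i => Real.exp (-ξ * |t i| ^ p))
  have heq : (fun i j => (fun i => Real.exp (-ξ * |t i| ^ p)) i
        * (fun i j => Real.exp (ξ * (|t i| ^ p + |t j| ^ p - |t i - t j| ^ p))) i j
        * (fun i => Real.exp (-ξ * |t i| ^ p)) j)
      = fun i j => Real.exp (-ξ * |t i - t j| ^ p) := by
    funext i j
    simp only
    rw [← Real.exp_add, ← Real.exp_add]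
    congr 1
    ring
  rwa [heq] at hE




lemma psdk_prod {m : ℕ} {α : Type*} [DecidableEq α] (s : Finset α)
    (F : α → Fin m → Fin m → ℝ) (h : ∀ k, Psdk (F k))
    (hsym : ∀ k i j, F k i j = F k j i) :
    Psdk (fun i j => ∏ k ∈ s, F k i j) := by
  induction s using Finset.induction_on with
  | empty => simpa using psdk_const (m := m) zero_le_one
  | @insert a s ha ih =>
      have hmul := psdk_mul (h a) ih (fun i j => Finset.prod_congr rfl fun k _ => hsym k i j)
      have heq : (fun i j => F a i j * ∏ k ∈ s, F k i j)
          = fun i j => ∏ k ∈ insert a s, F k i j := by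
        funext i j
        rw [Finset.prod_insert ha]
      rwa [heq] at hmul



/-- For any dimension `d`, `ξ > 0` and fixed `0 < p ≤ 2`, the Generalized
Gaussian kernel `K(x, z) = exp (-ξ · ∑ k, |x k - z k| ^ p)` is a positive semidefinite
kernel on `ℝ^d`: it is symmetric, and every Gram matrix
`(exp (-ξ · ∑ k, |x_i k - x_j k| ^ p))_{i,j}` is positive semidefinite. -/
theorem stmt11 (d : ℕ) (ξ : ℝ) (hξ : 0 < ξ) (p : ℝ) (hp : 0 < p) (hp2 : p ≤ 2) :
    (∀ x z : Fin d → ℝ,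
      Real.exp (-ξ * ∑ k, |x k - z k| ^ p) = Real.exp (-ξ * ∑ k, |z k - x k| ^ p)) ∧
    (∀ (m : ℕ) (x : Fin m → (Fin d → ℝ)),
      (Matrix.of fun i j : Fin m =>
        Real.exp (-ξ * ∑ k, |x i k - x j k| ^ p)).PosSemidef) := by
  have hsymsum : ∀ (u v : Fin d → ℝ), ∑ k, |u k - v k| ^ p = ∑ k, |v k - u k| ^ p :=
    fun u v => Finset.sum_congr rfl fun k _ => by rw [abs_sub_comm]
  constructor
  · intro x z
    rw [hsymsum x z]
  · intro m x
    have hpsdk : Psdk (fun i j : Fin m => Real.exp (-ξ * ∑ k, |x i k - x j k| ^ p)) := by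
      have hprod := psdk_prod (Finset.univ : Finset (Fin d))
        (fun k i j => Real.exp (-ξ * |x i k - x j k| ^ p))
        (fun k => psdk_expneg hξ hp (fun t c hc => negdef hp hp2 t c hc) (fun i => x i k))
        (fun k i j => by rw [abs_sub_comm])
      have heq : (fun i j : Fin m => ∏ k : Fin d, Real.exp (-ξ * |x i k - x j k| ^ p))
          = fun i j : Fin m => Real.exp (-ξ * ∑ k, |x i k - x j k| ^ p) := by
        funext i j
        rw [Finset.mul_sum, Real.exp_sum]
      rwa [heq] at hprod
    refine Matrix.PosSemidef.of_dotProduct_mulVec_nonneg ?_ ?_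
    · ext i j
      simp only [Matrix.conjTranspose_apply, Matrix.of_apply, star_trivial]
      rw [hsymsum (x j) (x i)]
    · intro y
      have hq : star y ⬝ᵥ (Matrix.of fun i j : Fin m =>
            Real.exp (-ξ * ∑ k, |x i k - x j k| ^ p)) *ᵥ y
          = ∑ i, ∑ j, y i * y j * Real.exp (-ξ * ∑ k, |x i k - x j k| ^ p) := by
        simp only [dotProduct, Matrix.mulVec, Matrix.of_apply, star_trivial,
          Pi.star_apply, Finset.mul_sum]
        exact Finset.sum_congr rfl fun i _ => Finset.sum_congr rfl fun j _ => by ring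
      rw [hq]
      exact hpsdk y

end Sch
end

section
/- For any p > 2 and any ξ > 0, the function K(x, z) = exp(−ξ · |x − z|^p) on ℝ is not a positive semidefinite kernel: there exists a finite collection of points x_1, …, x_m ∈ ℝ whose Gram matrix (exp(−ξ · |x_i − x_j|^p))_{i,j} is not positive semidefinite. -/
lemma exp_neg_le_quadratic {x : ℝ} (hx : 0 ≤ x) :
    Real.exp (-x) ≤ 1 - x + x ^ 2 / 2 := by
  have h1 : 1 + x + x ^ 2 / 2 ≤ Real.exp x := Real.quadratic_le_exp_of_nonneg hx
  have h2 : Real.exp (-x) * Real.exp x = 1 := by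
    rw [← Real.exp_add]; simp
  have h3 : 0 < Real.exp (-x) := Real.exp_pos _
  nlinarith [sq_nonneg x, sq_nonneg (x^2)]

/-- For any `p > 2` and `ξ > 0`, the function
`K(x, z) = exp (-ξ · |x - z| ^ p)` on `ℝ` is not a positive semidefinite kernel: there
is a finite collection of points in `ℝ` whose Gram matrix is not positive
semidefinite. -/
theorem stmt12 (p : ℝ) (hp : 2 < p) (ξ : ℝ) (hξ : 0 < ξ) :
    ∃ (m : ℕ) (x : Fin m → ℝ),
      ¬ (Matrix.of fun i j : Fin m =>
          Real.exp (-ξ * |x i - x j| ^ p)).PosSemidef := by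
  set c : ℝ := 2 ^ p with hc
  have hc4 : 4 < c := by
    have h1 : (2:ℝ) ^ (2:ℝ) < 2 ^ p := Real.rpow_lt_rpow_left_iff (by norm_num) |>.2 hp
    have h2 : (2:ℝ) ^ (2:ℝ) = 4 := by
      rw [Real.rpow_two]; norm_num
    rw [hc, ← h2]; exact h1
  have hcpos : 0 < c := by linarith
  set ε : ℝ := (c - 4) / c ^ 2 with hε
  have hεpos : 0 < ε := div_pos (by linarith) (by positivity)
  set t : ℝ := (ε / ξ) ^ p⁻¹ with ht
  have htpos : 0 < t := Real.rpow_pos_of_pos (by positivity) _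
  have htp : t ^ p = ε / ξ := Real.rpow_inv_rpow (by positivity) (by positivity)
  have hξt : ξ * t ^ p = ε := by
    rw [htp]; field_simp
  have h2tp : (2 * t) ^ p = c * t ^ p := by
    rw [Real.mul_rpow (by norm_num) htpos.le, hc]
  refine ⟨3, ![0, t, 2 * t], fun h => ?_⟩
  have key := h.dotProduct_mulVec_nonneg ![1, -2, 1]
  have e1 : |(0:ℝ) - t| = t := by rw [abs_sub_comm]; simp [abs_of_pos htpos]
  have e2 : |t - 2 * t| = t := by rw [abs_sub_comm]; rw [show 2*t - t = t by ring]; exact abs_of_pos htpos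
  have e3 : |(0:ℝ) - 2 * t| = 2 * t := by rw [abs_sub_comm]; simp [abs_of_pos htpos, abs_of_nonneg]
  have e1' : |t - (0:ℝ)| = t := by simp [abs_of_pos htpos]
  have e3' : |2 * t - (0:ℝ)| = 2 * t := by
    rw [sub_zero]; rw [abs_of_pos (by positivity)]
  have e2' : |2 * t - t| = t := by
    rw [show 2*t - t = t by ring]; exact abs_of_pos htpos
  simp only [dotProduct, Matrix.mulVec, Fin.sum_univ_three, Matrix.of_apply,
    Matrix.cons_val_zero, Matrix.cons_val_one, Matrix.head_cons, Matrix.cons_val_two,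
    Matrix.tail_cons, Pi.star_apply, star_trivial] at key
  rw [e1, e2, e3, e1', e3', e2'] at key
  simp only [sub_self, abs_zero] at key
  have hz : (0:ℝ) ^ p = 0 := Real.zero_rpow (by positivity)
  rw [hz, h2tp] at key
  have hu : Real.exp (-ξ * t ^ p) = Real.exp (-ε) := by rw [neg_mul, hξt]
  have hw : Real.exp (-ξ * (c * t ^ p)) = Real.exp (-(c * ε)) := by
    rw [neg_mul]; congr 1; rw [show ξ * (c * t ^ p) = c * (ξ * t ^ p) by ring, hξt]
  rw [hu, hw] at key
  simp only [mul_zero, neg_zero, Real.exp_zero] at key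
  -- key : 0 ≤ quadratic form = 6 - 8 exp(-ε) + 2 exp(-(c*ε))
  have hlb : 1 - ε ≤ Real.exp (-ε) := by
    have := Real.add_one_le_exp (-ε); linarith
  have hub : Real.exp (-(c * ε)) ≤ 1 - c * ε + (c * ε) ^ 2 / 2 :=
    exp_neg_le_quadratic (by positivity)
  have hce : c * ε = (c - 4) / c := by
    rw [hε]; field_simp
  have hneg : 1 - c * ε + (c * ε) ^ 2 / 2 < 4 * (1 - ε) - 3 := by
    rw [hce, hε, div_pow, ← sub_pos]
    have heq : 4 * (1 - (c - 4) / c ^ 2) - 3 - (1 - (c - 4) / c + (c - 4) ^ 2 / c ^ 2 / 2)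
        = (c - 4) ^ 2 / (2 * c ^ 2) := by
      field_simp
      ring
    rw [heq]
    exact div_pos (pow_pos (by linarith) 2) (by positivity)
  nlinarith [key, hlb, hub, hneg]
end

section
/- Let d ∈ ℕ, c > 0, p > 0. Suppose Z : ℝ^d → ℝ^d, U : ℝ^d → ℝ_+^d, H is a real Hilbert space, and ψ : ℝ^d × ℝ_+^d → H satisfy ⟪ψ(Z(x), U(x)), ψ(z, u)⟫ = exp(−c · Σ_{i=1}^d u_i · |x_i − z_i|^p) for all x, z ∈ ℝ^d and u ∈ ℝ_+^d. Then Z is the identity mapping: Z(x) = x for all x ∈ ℝ^d. -/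
/-- Let `d ∈ ℕ`, `c > 0`, `p > 0`.  Suppose `Z : ℝ^d → ℝ^d`,
`U : ℝ^d → ℝ_+^d`, `H` a real Hilbert space, and `ψ : ℝ^d × ℝ_+^d → H` satisfy
`⟪ψ(Z x, U x), ψ(z, u)⟫ = exp (-c * ∑ i, u i * |x i - z i| ^ p)` for all `x, z, u`
(with `u` in the non-negative orthant).  Then `Z` is the identity mapping. -/
theorem stmt15 (d : ℕ) (c p : ℝ) (hc : 0 < c) (hp : 0 < p)
    (Z U : (Fin d → ℝ) → (Fin d → ℝ))
    (H : Type*) [NormedAddCommGroup H] [InnerProductSpace ℝ H] [CompleteSpace H]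
    (ψ : (Fin d → ℝ) → (Fin d → ℝ) → H)
    (hU : ∀ x i, 0 ≤ U x i)
    (hψ : ∀ (x z u : Fin d → ℝ), (∀ i, 0 ≤ u i) →
      (inner ℝ (ψ (Z x) (U x)) (ψ z u) : ℝ) =
        Real.exp (-c * ∑ i, u i * |x i - z i| ^ p)) :
    ∀ x : Fin d → ℝ, Z x = x := by
  intro x
  set a := ψ (Z x) (U x) with ha_def
  set b := ψ (Z (Z x)) (U (Z x)) with hb_def
  -- ⟨b, a⟩ = 1
  have hba : (inner ℝ b a : ℝ) = 1 := by
    have h := hψ (Z x) (Z x) (U x) (hU x)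
    simpa [sub_self, abs_zero, Real.zero_rpow hp.ne'] using h
  -- ‖a‖² ≤ 1
  have sumnn : ∀ (y z : Fin d → ℝ), 0 ≤ ∑ i, U y i * |z i - Z y i| ^ p := by
    intro y z
    refine Finset.sum_nonneg fun i _ => mul_nonneg (hU y i) ?_
    exact Real.rpow_nonneg (abs_nonneg _) p
  have ha2 : ‖a‖ ^ 2 ≤ 1 := by
    have h := hψ x (Z x) (U x) (hU x)
    rw [← ha_def, real_inner_self_eq_norm_sq] at h
    rw [h]
    rw [Real.exp_le_one_iff]
    have := sumnn x x
    nlinarith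
  have hb2 : ‖b‖ ^ 2 ≤ 1 := by
    have h := hψ (Z x) (Z (Z x)) (U (Z x)) (hU (Z x))
    rw [← hb_def, real_inner_self_eq_norm_sq] at h
    rw [h]
    rw [Real.exp_le_one_iff]
    have := sumnn (Z x) (Z x)
    nlinarith
  -- equality in Cauchy–Schwarz forces a = b
  have hab : a = b := by
    have hsq : ‖a - b‖ ^ 2 ≤ 0 := by
      have := @norm_sub_sq_real H _ _ a b
      have hcomm : (inner ℝ a b : ℝ) = inner ℝ b a := real_inner_comm b a
      rw [this, hcomm, hba]
      linarith
    have : ‖a - b‖ = 0 := by nlinarith [norm_nonneg (a - b)]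
    have := norm_eq_zero.mp this
    exact sub_eq_zero.mp this
  funext i
  -- indicator weight at coordinate i
  set u : Fin d → ℝ := fun j => if j = i then 1 else 0 with hu_def
  have hu : ∀ j, 0 ≤ u j := by
    intro j; simp only [hu_def]; split <;> norm_num
  have sum_eq : ∀ (w : Fin d → ℝ), (∑ j, u j * |w j - Z x j| ^ p) = |w i - Z x i| ^ p := by
    intro w
    rw [Fintype.sum_eq_single i]
    · simp [hu_def]
    · intro j hj; simp [hu_def, hj]
  have e1 := hψ x (Z x) u hu
  have e2 := hψ (Z x) (Z x) u hu
  rw [← ha_def] at e1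
  rw [← hb_def, ← hab] at e2
  rw [e1, sum_eq] at e2
  rw [sum_eq] at e2
  simp only [sub_self, abs_zero, Real.zero_rpow hp.ne', mul_zero, Real.exp_zero] at e2
  -- e2 : exp (-c * |x i - Z x i|^p) = 1
  have h0 : -c * |x i - Z x i| ^ p = 0 := by
    rw [← Real.exp_zero, Real.exp_eq_exp] at e2
    exact e2
  have hpow : |x i - Z x i| ^ p = 0 := by
    have hc' : c ≠ 0 := hc.ne'
    have hnn : 0 ≤ |x i - Z x i| ^ p := Real.rpow_nonneg (abs_nonneg _) p
    nlinarith
  have habs : |x i - Z x i| = 0 := by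
    rcases (Real.rpow_eq_zero_iff_of_nonneg (abs_nonneg _)).mp hpow with ⟨h1, _⟩
    exact h1
  have := abs_eq_zero.mp habs
  linarith
end

section
/- Let d ∈ ℕ, c > 0, p > 0. Suppose U : ℝ^d → ℝ_+^d, H is a real Hilbert space, and ψ : ℝ^d × ℝ_+^d → H satisfy ⟪ψ(x, U(x)), ψ(z, u)⟫ = exp(−c · Σ_{i=1}^d u_i · |x_i − z_i|^p) for all x, z ∈ ℝ^d and u ∈ ℝ_+^d. Then for every x ∈ ℝ^d, U(x) is not the zero vector, i.e. there exists a coordinate i with U(x)_i > 0. -/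
/-- Let `d ∈ ℕ`, `c > 0`, `p > 0`.  Suppose `U : ℝ^d → ℝ_+^d`, `H` a real
Hilbert space, and `ψ : ℝ^d × ℝ_+^d → H` satisfy
`⟪ψ(x, U x), ψ(z, u)⟫ = exp (-c * ∑ i, u i * |x i - z i| ^ p)` for all `x, z, u`
(with `u` in the non-negative orthant).  Then for every `x`, `U x` is not the zero
vector: some coordinate of `U x` is positive. -/
theorem stmt16 (d : ℕ) (hd : 0 < d) (c p : ℝ) (hc : 0 < c) (hp : 0 < p)
    (U : (Fin d → ℝ) → (Fin d → ℝ))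
    (H : Type*) [NormedAddCommGroup H] [InnerProductSpace ℝ H] [CompleteSpace H]
    (ψ : (Fin d → ℝ) → (Fin d → ℝ) → H)
    (hU : ∀ x i, 0 ≤ U x i)
    (hψ : ∀ (x z u : Fin d → ℝ), (∀ i, 0 ≤ u i) →
      (inner ℝ (ψ x (U x)) (ψ z u) : ℝ) =
        Real.exp (-c * ∑ i, u i * |x i - z i| ^ p)) :
    ∀ x : Fin d → ℝ, ∃ i, 0 < U x i := by
  have key : ∀ s : ℝ, Real.exp s = 1 → s = 0 := by
    intro s hs
    have : Real.exp s = Real.exp 0 := by rw [hs, Real.exp_zero]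
    exact Real.exp_injective this
  intro x
  by_contra h
  push_neg at h
  have hUx : ∀ i, U x i = 0 := fun i => le_antisymm (h i) (hU x i)
  set w : Fin d → ℝ := fun i => x i + 2 with hw
  have habs : ∀ i, |x i - w i| = 2 := by
    intro i; simp [hw]
  -- U w = 0
  have h1 : (inner ℝ (ψ w (U w)) (ψ x (U x)) : ℝ) = 1 := by
    rw [hψ w x (U x) (hU x)]
    have hz : ∑ i, U x i * |w i - x i| ^ p = 0 := by
      simp [hUx]
    rw [hz, mul_zero, Real.exp_zero]
  have h2 : (inner ℝ (ψ x (U x)) (ψ w (U w)) : ℝ)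
      = Real.exp (-c * ∑ i, U w i * |x i - w i| ^ p) := hψ x w (U w) (hU w)
  have hsum : ∑ i, U w i * |x i - w i| ^ p = 0 := by
    have hx := h2
    rw [real_inner_comm, h1] at hx
    have h3 : -c * ∑ i, U w i * |x i - w i| ^ p = 0 := key _ hx.symm
    have : c * ∑ i, U w i * |x i - w i| ^ p = 0 := by linarith
    exact (mul_eq_zero.mp this).resolve_left (ne_of_gt hc)
  have hUw : ∀ i, U w i = 0 := by
    intro i
    have hnn : ∀ j ∈ Finset.univ, 0 ≤ U w j * |x j - w j| ^ p := fun j _ =>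
      mul_nonneg (hU w j) (Real.rpow_nonneg (abs_nonneg _) p)
    have hterm : U w i * |x i - w i| ^ p = 0 :=
      (Finset.sum_eq_zero_iff_of_nonneg hnn).mp hsum i (Finset.mem_univ i)
    have hpos : (0:ℝ) < |x i - w i| ^ p := by
      rw [habs i]
      exact Real.rpow_pos_of_pos two_pos p
    exact (mul_eq_zero.mp hterm).resolve_right (ne_of_gt hpos)
  -- ψ x (U x) = ψ w (U w)
  have haa : (inner ℝ (ψ x (U x)) (ψ x (U x)) : ℝ) = 1 := by
    rw [hψ x x (U x) (hU x)]; simp [hUx]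
  have hbb : (inner ℝ (ψ w (U w)) (ψ w (U w)) : ℝ) = 1 := by
    rw [hψ w w (U w) (hU w)]; simp [hUw]
  have hab : (inner ℝ (ψ x (U x)) (ψ w (U w)) : ℝ) = 1 := by
    rw [h2]; simp [hUw]
  have heq : ψ x (U x) = ψ w (U w) := by
    have hz : (inner ℝ (ψ x (U x) - ψ w (U w)) (ψ x (U x) - ψ w (U w)) : ℝ) = 0 := by
      rw [inner_sub_sub_self, haa, hbb, hab, h1]
      ring
    exact sub_eq_zero.mp (inner_self_eq_zero.mp hz)
  -- pair with ψ w (constant 1)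
  set u1 : Fin d → ℝ := fun _ => 1 with hu1
  have hone : ∀ i, (0:ℝ) ≤ u1 i := fun i => by norm_num [hu1]
  have e1 : (inner ℝ (ψ x (U x)) (ψ w u1) : ℝ) = Real.exp (-c * (d * 2 ^ p)) := by
    rw [hψ x w u1 hone]
    congr 1
    have : ∀ i : Fin d, u1 i * |x i - w i| ^ p = 2 ^ p := by
      intro i; rw [habs i, hu1]; simp
    rw [Finset.sum_congr rfl fun i _ => this i, Finset.sum_const]
    simp [mul_comm]
  have e2 : (inner ℝ (ψ w (U w)) (ψ w u1) : ℝ) = 1 := by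
    rw [hψ w w u1 hone]
    have : ∀ i : Fin d, u1 i * |w i - w i| ^ p = 0 := by
      intro i
      simp [Real.zero_rpow (ne_of_gt hp)]
    rw [Finset.sum_congr rfl fun i _ => this i]
    simp
  rw [heq, e2] at e1
  have h0 : -c * (d * 2 ^ p) = 0 := key _ e1.symm
  have hdpos : (0:ℝ) < d := by exact_mod_cast hd
  have h2p : (0:ℝ) < 2 ^ p := Real.rpow_pos_of_pos two_pos p
  nlinarith [mul_pos hc (mul_pos hdpos h2p)]
end
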